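/- Let G be a paratopological gyrogroup and a ∈ G. Then the right translation R_a : G → G, x ↦ x⊕a, is a homeomorphism, and its inverse is given by R_a^{-1} = L_{⊖a} ∘ R_{⊖a} ∘ L_a, i.e., R_a^{-1}(x) = (⊖a) ⊕ ((a⊕x) ⊕ (⊖a)). -/

import Mathlib

/-!
Right translation by `a` is inverted by `x ↦ -a + ((a + x) + -a)` because every gyrogroup
satisfies the left Bol identity `p + (q + (p + d)) = (p + (q + p)) + d`, which follows from left
gyroassociativity and the left loop property alone.
-/

open Pointwise

/-- A gyrogroup: a groupoid with identity, inverses, gyroautomorphisms satisfying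
the left gyroassociative law and the left loop property. -/
class Gyrogroup (G : Type*) extends Zero G, Neg G, Add G where
  zero_add : ∀ a : G, 0 + a = a
  add_zero : ∀ a : G, a + 0 = a
  neg_add_cancel : ∀ a : G, -a + a = 0
  add_neg_cancel : ∀ a : G, a + -a = 0
  gyr : G → G → G → G
  gyr_bijective : ∀ a b : G, Function.Bijective (gyr a b)
  gyr_add : ∀ a b x y : G, gyr a b (x + y) = gyr a b x + gyr a b y
  gyrassoc : ∀ a b c : G, a + (b + c) = a + b + gyr a b c
  loop : ∀ a b : G, gyr (a + b) b = gyr a b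

namespace Gyrogroup

variable {G : Type*} [Gyrogroup G]

theorem add_left_cancel {a b c : G} (h : a + b = a + c) : b = c := by
  have h' : -a + (a + b) = -a + (a + c) := by rw [h]
  rw [gyrassoc, gyrassoc, neg_add_cancel, zero_add, zero_add] at h'
  exact (gyr_bijective (-a) a).injective h'

theorem gyr_zero_left (b c : G) : gyr 0 b c = c := by
  have h := gyrassoc 0 b c
  rw [zero_add, zero_add] at h
  exact (add_left_cancel h).symm

theorem gyr_of_add_eq_zero {a b : G} (h : a + b = 0) (c : G) : gyr a b c = c := by
  rw [← loop, h, gyr_zero_left]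

theorem neg_add_cancel_left (a b : G) : -a + (a + b) = b := by
  rw [gyrassoc, neg_add_cancel, zero_add, gyr_of_add_eq_zero (neg_add_cancel a)]

theorem add_neg_cancel_left (a b : G) : a + (-a + b) = b := by
  rw [gyrassoc, add_neg_cancel, zero_add, gyr_of_add_eq_zero (add_neg_cancel a)]

theorem gyr_apply (a b c : G) : gyr a b c = -(a + b) + (a + (b + c)) := by
  rw [gyrassoc a b c, neg_add_cancel_left]

theorem add_add_eq_add_add_gyr (a b e : G) : (a + b) + e = ((a + b) + b) + gyr a b (-b + e) := by
  have h := gyrassoc (a + b) b (-b + e)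
  rwa [add_neg_cancel_left, loop] at h

theorem left_bol (p q d : G) : p + (q + (p + d)) = (p + (q + p)) + d := by
  have h := add_add_eq_add_add_gyr (-q) (q + p) (q + (p + d))
  rwa [gyr_apply, add_neg_cancel_left, neg_add_cancel_left, neg_add_cancel_left,
    neg_add_cancel_left] at h

theorem leftInverse_add_right (a : G) :
    Function.LeftInverse (fun x : G => -a + ((a + x) + -a)) (fun x : G => x + a) := fun x => by
  have h := left_bol a x (-a)
  rw [add_neg_cancel, add_zero] at h
  simp only [← h, neg_add_cancel_left]

theorem rightInverse_add_right (a : G) :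
    Function.RightInverse (fun x : G => -a + ((a + x) + -a)) (fun x : G => x + a) := fun x => by
  have h := left_bol (-a) (a + x) a
  rw [neg_add_cancel, add_zero, neg_add_cancel_left] at h
  exact h.symm

def addRightHomeomorph [TopologicalSpace G] [ContinuousAdd G] (a : G) : G ≃ₜ G where
  toFun x := x + a
  invFun x := -a + ((a + x) + -a)
  left_inv := leftInverse_add_right a
  right_inv := rightInverse_add_right a
  continuous_toFun := by fun_prop
  continuous_invFun := by fun_prop

end Gyrogroup

/-- In a paratopological gyrogroup, the right translation R_a : x ↦ x⊕a is a homeomorphism,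
with inverse R_a⁻¹ = L_{⊖a} ∘ R_{⊖a} ∘ L_a, i.e. R_a⁻¹(x) = (⊖a) ⊕ ((a⊕x) ⊕ (⊖a)). -/
theorem right_translation_isHomeomorph {G : Type*} [Gyrogroup G] [TopologicalSpace G]
    [ContinuousAdd G] (a : G) :
    IsHomeomorph (fun x : G => x + a) ∧
      Function.LeftInverse (fun x : G => -a + ((a + x) + -a)) (fun x : G => x + a) ∧
      Function.RightInverse (fun x : G => -a + ((a + x) + -a)) (fun x : G => x + a) :=
  ⟨(Gyrogroup.addRightHomeomorph a).isHomeomorph, Gyrogroup.leftInverse_add_right a,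
    Gyrogroup.rightInverse_add_right a⟩
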